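/- arXiv:1311.2465 — 2 statements merged into one kernel-verified Lean document; each statement's English description precedes it below -/
import Mathlib

section
/- Let m ≥ 2 and n ≥ 2. In the mixed braid group B_{m,n}, combing a 2-strand cable through a positive crossing of the first two fixed strands gives the same result whether the cable is combed as a single thickened strand or strand by strand; explicitly, the following identity holds: a_2^{-1} · (σ_1^{-1} a_2^{-1} σ_1) · a_1 · (σ_1 a_1 σ_1^{-1}) · a_2 · (σ_1 a_2 σ_1^{-1}) = (a_2^{-1} a_1 a_2) · (σ_1 a_2^{-1} a_1 a_2 σ_1^{-1}). -/
/-- The free-group generator corresponding to the loop generator `a_{i+1}`. -/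
def genA (m n : ℕ) (i : Fin m) : FreeGroup (Fin m ⊕ Fin (n - 1)) :=
  FreeGroup.of (Sum.inl i)

/-- The free-group generator corresponding to the braiding generator `σ_{k+1}`. -/
def genS (m n : ℕ) (k : Fin (n - 1)) : FreeGroup (Fin m ⊕ Fin (n - 1)) :=
  FreeGroup.of (Sum.inr k)

/-- The defining relations of the mixed braid group `B_{m,n}`:
`σ_k σ_j = σ_j σ_k` for `|k-j| > 1`; `σ_k σ_{k+1} σ_k = σ_{k+1} σ_k σ_{k+1}`;
`a_i σ_k = σ_k a_i` for `k ≥ 2`; `a_i σ_1 a_i σ_1 = σ_1 a_i σ_1 a_i`;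
`a_i (σ_1 a_r σ_1⁻¹) = (σ_1 a_r σ_1⁻¹) a_i` for `r < i`.
(Indices of generators are 0-based: `Sum.inl i ↦ a_{i+1}`, `Sum.inr k ↦ σ_{k+1}`.) -/
def mixedRels (m n : ℕ) : Set (FreeGroup (Fin m ⊕ Fin (n - 1))) :=
  {x | ∃ k j : Fin (n - 1), (k : ℕ) + 2 ≤ (j : ℕ) ∧
      x = genS m n k * genS m n j * (genS m n k)⁻¹ * (genS m n j)⁻¹} ∪
  {x | ∃ k j : Fin (n - 1), (k : ℕ) + 1 = (j : ℕ) ∧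
      x = genS m n k * genS m n j * genS m n k *
          (genS m n j)⁻¹ * (genS m n k)⁻¹ * (genS m n j)⁻¹} ∪
  {x | ∃ (i : Fin m) (k : Fin (n - 1)), 1 ≤ (k : ℕ) ∧
      x = genA m n i * genS m n k * (genA m n i)⁻¹ * (genS m n k)⁻¹} ∪
  {x | ∃ (i : Fin m) (k : Fin (n - 1)), (k : ℕ) = 0 ∧
      x = genA m n i * genS m n k * genA m n i * genS m n k *
          (genA m n i)⁻¹ * (genS m n k)⁻¹ * (genA m n i)⁻¹ * (genS m n k)⁻¹} ∪
  {x | ∃ (i r : Fin m) (k : Fin (n - 1)), (r : ℕ) < (i : ℕ) ∧ (k : ℕ) = 0 ∧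
      x = genA m n i * (genS m n k * genA m n r * (genS m n k)⁻¹) *
          (genA m n i)⁻¹ * (genS m n k * genA m n r * (genS m n k)⁻¹)⁻¹}

/-- The mixed braid group `B_{m,n}`. -/
abbrev MixedBraid (m n : ℕ) := PresentedGroup (mixedRels m n)

/-- The loop generator `a_i` (1-based, `1 ≤ i ≤ m`); junk value `1` out of range. -/
def aGen (m n i : ℕ) : MixedBraid m n :=
  if h : 1 ≤ i ∧ i ≤ m then PresentedGroup.of (Sum.inl ⟨i - 1, by omega⟩) else 1

/-- The braiding generator `σ_k` (1-based, `1 ≤ k ≤ n-1`); junk value `1` out of range. -/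
def sGen (m n k : ℕ) : MixedBraid m n :=
  if h : 1 ≤ k ∧ k ≤ n - 1 then PresentedGroup.of (Sum.inr ⟨k - 1, by omega⟩) else 1

/-- `λ_{l,1} := σ_l σ_{l-1} ⋯ σ_1`, with `λ_{0,1} := 1`. -/
def lamD (m n l : ℕ) : MixedBraid m n :=
  ((List.range l).map (fun t => sGen m n (l - t))).prod

/-- `λ_{1,l} := σ_1 σ_2 ⋯ σ_l`, with `λ_{1,0} := 1`. -/
def lamU (m n l : ℕ) : MixedBraid m n :=
  ((List.range l).map (fun t => sGen m n (t + 1))).prod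

/-!
Only two relations of `B_{m,n}` enter: `a₂` commutes with `σ₁ a₁ σ₁⁻¹`, and
`a₂ σ₁ a₂ σ₁ = σ₁ a₂ σ₁ a₂`, i.e. `a₂` commutes with `σ₁ a₂ σ₁`. Hence `a₂` commutes with their
product `σ₁ a₁ a₂ σ₁`, and sliding `a₂⁻¹` across this block (after swapping `σ₁ a₁ σ₁⁻¹` past `a₂`)
turns the strand-by-strand combing into the combing of the thickened strand.
-/

open scoped commutatorElement

theorem PresentedGroup.commute_of_commutatorElement_mem {α : Type*} {rels : Set (FreeGroup α)}
    {g h : FreeGroup α} (hr : ⁅g, h⁆ ∈ rels) : Commute (mk rels g) (mk rels h) := by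
  rw [← commutatorElement_eq_one_iff_commute, ← map_commutatorElement]
  exact one_of_mem hr

theorem cable_combing_of_commute {G : Type*} [Group G] {a b s : G}
    (hba : Commute b (s * a * s⁻¹)) (hbb : Commute b (s * b * s)) :
    b⁻¹ * (s⁻¹ * b⁻¹ * s) * a * (s * a * s⁻¹) * b * (s * b * s⁻¹) =
      (b⁻¹ * a * b) * (s * b⁻¹ * a * b * s⁻¹) := by
  have hblock : Commute b⁻¹ (s * a * b * s) := by
    simpa [mul_assoc] using (hba.mul_right hbb).inv_left
  calc b⁻¹ * (s⁻¹ * b⁻¹ * s) * a * (s * a * s⁻¹) * b * (s * b * s⁻¹)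
      = b⁻¹ * s⁻¹ * b⁻¹ * s * a * ((s * a * s⁻¹) * b) * (s * b * s⁻¹) := by group
    _ = b⁻¹ * s⁻¹ * (b⁻¹ * (s * a * b * s)) * (a * b * s⁻¹) := by rw [← hba.eq]; group
    _ = b⁻¹ * s⁻¹ * ((s * a * b * s) * b⁻¹) * (a * b * s⁻¹) := by rw [hblock.eq]
    _ = (b⁻¹ * a * b) * (s * b⁻¹ * a * b * s⁻¹) := by group

namespace MixedBraid

theorem aGen_eq_mk {m n i : ℕ} (hi : 1 ≤ i) (him : i ≤ m) :
    aGen m n i = PresentedGroup.mk _ (genA m n ⟨i - 1, by omega⟩) :=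
  dif_pos ⟨hi, him⟩

theorem sGen_one_eq_mk {m n : ℕ} (hn : 2 ≤ n) :
    sGen m n 1 = PresentedGroup.mk _ (genS m n ⟨0, by omega⟩) :=
  dif_pos ⟨le_rfl, by omega⟩

theorem commute_aGen_sGen_one_conj_aGen {m n i r : ℕ} (hr : 1 ≤ r) (hri : r < i) (him : i ≤ m)
    (hn : 2 ≤ n) : Commute (aGen m n i) (sGen m n 1 * aGen m n r * (sGen m n 1)⁻¹) := by
  rw [aGen_eq_mk (by omega) him, aGen_eq_mk hr (by omega), sGen_one_eq_mk hn]
  simp only [← map_mul, ← map_inv]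
  refine PresentedGroup.commute_of_commutatorElement_mem
    (Or.inr ⟨⟨i - 1, by omega⟩, ⟨r - 1, by omega⟩, ⟨0, by omega⟩, ?_, rfl, ?_⟩)
  · show r - 1 < i - 1
    omega
  · rw [commutatorElement_def]

theorem commute_aGen_sGen_one_mul_aGen_mul_sGen_one {m n i : ℕ} (hi : 1 ≤ i) (him : i ≤ m)
    (hn : 2 ≤ n) : Commute (aGen m n i) (sGen m n 1 * aGen m n i * sGen m n 1) := by
  rw [aGen_eq_mk hi him, sGen_one_eq_mk hn]
  simp only [← map_mul]
  refine PresentedGroup.commute_of_commutatorElement_mem 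
    (Or.inl (Or.inr ⟨⟨i - 1, by omega⟩, ⟨0, by omega⟩, rfl, ?_⟩))
  rw [commutatorElement_def]
  group

end MixedBraid

/-- Combing a 2-strand cable through a positive crossing of the first two fixed
strands gives the same result whether combed as a single thickened strand or
strand by strand. -/
theorem combing_two_strand_cable (m n : ℕ) (hm : 2 ≤ m) (hn : 2 ≤ n) :
    (aGen m n 2)⁻¹ * ((sGen m n 1)⁻¹ * (aGen m n 2)⁻¹ * sGen m n 1) *
      aGen m n 1 * (sGen m n 1 * aGen m n 1 * (sGen m n 1)⁻¹) *
      aGen m n 2 * (sGen m n 1 * aGen m n 2 * (sGen m n 1)⁻¹) =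
    ((aGen m n 2)⁻¹ * aGen m n 1 * aGen m n 2) *
      (sGen m n 1 * (aGen m n 2)⁻¹ * aGen m n 1 * aGen m n 2 * (sGen m n 1)⁻¹) :=
  cable_combing_of_commute (MixedBraid.commute_aGen_sGen_one_conj_aGen le_rfl one_lt_two hm hn)
    (MixedBraid.commute_aGen_sGen_one_mul_aGen_mul_sGen_one (by omega) hm hn)
end

section
/- Let m ≥ 1, n ≥ 1, 1 ≤ j ≤ m and 1 ≤ q ≤ n. In the mixed braid group B_{m,n}, the two algebraic expressions for a positive looping between a q-strand cable and the j-th fixed strand are equal: ∏_{i=0}^{q−1} λ_{i,1} a_j λ_{i,1}^{−1} = ∏_{i=0}^{q−1} λ_{1,(q−1)−i}^{−1} a_j λ_{1,(q−1)−i}, where both products are taken left to right in increasing order of i. -/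
/-!
Write `A_k = λ_{k,1} a_j λ_{k,1}⁻¹` (`aConjLamD`), `B_k = λ_{1,k}⁻¹ a_j λ_{1,k}` (`aConjLamU`) and
`P_q = A_0 A_1 ⋯ A_{q-1}` (`cableLoop`), so that `A_{k+1} = σ_{k+1} A_k σ_{k+1}⁻¹` and
`B_{k+1} = σ_{k+1}⁻¹ B_k σ_{k+1}`. The heart of the matter is `P_q A_q = B_q P_q`: then
`P_{q+1} = B_q P_q` unwinds to `P_q = B_{q-1} ⋯ B_0`, the right-hand side.

`P_q A_q = B_q P_q` passes from `q` to `q + 1` because `σ_{q+1}` commutes with `P_q` and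
`A_q` satisfies the mixed relation `A_q σ_{q+1} A_q σ_{q+1} = σ_{q+1} A_q σ_{q+1} A_q`. For
`q = 0` this is a defining relation of `B_{m,n}`; conjugating it by `σ_{q+1} σ_{q+2}`, which
sends `σ_{q+1}` to `σ_{q+2}` (braid relation) and `A_q` to `A_{q+1}`, gives it for `q + 1`.
-/

section GroupLemmas

variable {G : Type*} [Group G]

theorem Commute.conj_of_braid {a s t : G} (h : Commute a (s * a * s))
    (hst : s * t * s = t * s * t) (hat : Commute a t) :
    Commute (s * a * s⁻¹) (t * (s * a * s⁻¹) * t) := by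
  have hs : MulAut.conj (s * t) s = t := by rw [MulAut.conj_apply, hst]; group
  have ha : MulAut.conj (s * t) a = s * a * s⁻¹ := by
    rw [MulAut.conj_apply, mul_assoc s, ← hat.eq]; group
  have := h.map (MulAut.conj (s * t))
  rwa [map_mul (MulAut.conj (s * t)), map_mul (MulAut.conj (s * t)), hs, ha] at this

theorem SemiconjBy.mul_conj {p a b s : G} (h : SemiconjBy p a b) (hp : Commute s p)
    (ha : Commute a (s * a * s)) : SemiconjBy (p * a) (s * a * s⁻¹) (s⁻¹ * b * s) := by
  have key : a * (s * a * s⁻¹) = s⁻¹ * (a * s * a) := by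
    calc a * (s * a * s⁻¹) = s⁻¹ * (s * a * s * a) * s⁻¹ := by group
      _ = s⁻¹ * (a * s * a * s) * s⁻¹ := by rw [← ha.eq]; group
      _ = s⁻¹ * (a * s * a) := by group
  calc p * a * (s * a * s⁻¹) = p * s⁻¹ * (a * s * a) := by rw [mul_assoc p, key]; group
    _ = s⁻¹ * (p * a) * s * a := by rw [← hp.inv_left.eq]; group
    _ = s⁻¹ * b * (p * s) * a := by rw [h.eq]; group
    _ = s⁻¹ * b * s * (p * a) := by rw [← hp.eq]; group

end GroupLemmas

namespace MixedBraid

open PresentedGroup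

variable {m n : ℕ}

theorem of_inr_commute {k t : Fin (n - 1)} (h : (k : ℕ) + 2 ≤ t) :
    Commute (of (.inr k) : MixedBraid m n) (of (.inr t)) := by
  rw [← commutatorElement_eq_one_iff_commute]
  exact one_of_mem (.inl (.inl (.inl (.inl ⟨k, t, h, rfl⟩))))

theorem of_inr_braid {k t : Fin (n - 1)} (h : (k : ℕ) + 1 = t) :
    (of (.inr k) * of (.inr t) * of (.inr k) : MixedBraid m n) =
      of (.inr t) * of (.inr k) * of (.inr t) := by
  have hrel : (of (.inr k) * of (.inr t) * of (.inr k) * (of (.inr t))⁻¹ * (of (.inr k))⁻¹ *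
      (of (.inr t))⁻¹ : MixedBraid m n) = 1 :=
    one_of_mem (.inl (.inl (.inl (.inr ⟨k, t, h, rfl⟩))))
  rw [← mul_inv_eq_one]
  simpa only [mul_inv_rev, mul_assoc] using hrel

theorem of_inl_commute_of_inr {i : Fin m} {k : Fin (n - 1)} (h : 1 ≤ (k : ℕ)) :
    Commute (of (.inl i) : MixedBraid m n) (of (.inr k)) := by
  rw [← commutatorElement_eq_one_iff_commute]
  exact one_of_mem (.inl (.inl (.inr ⟨i, k, h, rfl⟩)))

theorem of_inl_commute_of_inr_zero {i : Fin m} {k : Fin (n - 1)} (h : (k : ℕ) = 0) :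
    Commute (of (.inl i) : MixedBraid m n) (of (.inr k) * of (.inl i) * of (.inr k)) := by
  have hrel : (of (.inl i) * of (.inr k) * of (.inl i) * of (.inr k) * (of (.inl i))⁻¹ *
      (of (.inr k))⁻¹ * (of (.inl i))⁻¹ * (of (.inr k))⁻¹ : MixedBraid m n) = 1 :=
    one_of_mem (.inl (.inr ⟨i, k, h, rfl⟩))
  rw [← commutatorElement_eq_one_iff_commute]
  simpa only [commutatorElement_def, mul_inv_rev, mul_assoc] using hrel

theorem sGen_eq_one {k : ℕ} (h : ¬(1 ≤ k ∧ k ≤ n - 1)) : sGen m n k = 1 := dif_neg h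

theorem sGen_commute {k t : ℕ} (h : k + 2 ≤ t) : Commute (sGen m n k) (sGen m n t) := by
  unfold sGen
  split_ifs
  · exact of_inr_commute (by simp only; omega)
  all_goals simp

theorem sGen_braid {k : ℕ} (hk : 1 ≤ k) (h : k + 1 ≤ n - 1) :
    sGen m n k * sGen m n (k + 1) * sGen m n k =
      sGen m n (k + 1) * sGen m n k * sGen m n (k + 1) := by
  rw [sGen, sGen, dif_pos ⟨hk, by omega⟩, dif_pos ⟨by omega, h⟩]
  exact of_inr_braid (by simp only; omega)

theorem aGen_commute_sGen {j k : ℕ} (hk : 2 ≤ k) : Commute (aGen m n j) (sGen m n k) := by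
  unfold aGen sGen
  split_ifs
  · exact of_inl_commute_of_inr (by simp only; omega)
  all_goals simp

theorem aGen_commute_sGen_one_conj (j : ℕ) :
    Commute (aGen m n j) (sGen m n 1 * aGen m n j * sGen m n 1) := by
  unfold aGen sGen
  split_ifs
  · exact of_inl_commute_of_inr_zero rfl
  all_goals simp

theorem lamD_succ (l : ℕ) : lamD m n (l + 1) = sGen m n (l + 1) * lamD m n l := by
  simp only [lamD, List.prod_range_succ', Nat.sub_zero, Nat.succ_eq_add_one,
    Nat.add_sub_add_right]

theorem lamU_succ (l : ℕ) : lamU m n (l + 1) = lamU m n l * sGen m n (l + 1) := by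
  simp only [lamU, List.prod_range_succ]

theorem sGen_commute_lamD {t l : ℕ} (h : l + 2 ≤ t) : Commute (sGen m n t) (lamD m n l) := by
  refine Commute.list_prod_right _ _ fun x hx => ?_
  obtain ⟨i, hi, rfl⟩ := List.mem_map.mp hx
  exact (sGen_commute (by omega)).symm

def aConjLamD (m n j k : ℕ) : MixedBraid m n := lamD m n k * aGen m n j * (lamD m n k)⁻¹

def aConjLamU (m n j k : ℕ) : MixedBraid m n := (lamU m n k)⁻¹ * aGen m n j * lamU m n k

def cableLoop (m n j q : ℕ) : MixedBraid m n := ((List.range q).map (aConjLamD m n j)).prod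

theorem aConjLamD_succ (j k : ℕ) :
    aConjLamD m n j (k + 1) = sGen m n (k + 1) * aConjLamD m n j k * (sGen m n (k + 1))⁻¹ := by
  simp only [aConjLamD, lamD_succ]; group

theorem aConjLamU_succ (j k : ℕ) :
    aConjLamU m n j (k + 1) = (sGen m n (k + 1))⁻¹ * aConjLamU m n j k * sGen m n (k + 1) := by
  simp only [aConjLamU, lamU_succ]; group

theorem cableLoop_succ (j q : ℕ) :
    cableLoop m n j (q + 1) = cableLoop m n j q * aConjLamD m n j q :=
  List.prod_range_succ _ q

theorem sGen_commute_aConjLamD {t j k : ℕ} (h : k + 2 ≤ t) :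
    Commute (sGen m n t) (aConjLamD m n j k) :=
  ((sGen_commute_lamD h).mul_right (aGen_commute_sGen (by omega)).symm).mul_right
    (sGen_commute_lamD h).inv_right

theorem sGen_commute_cableLoop {t j q : ℕ} (h : q + 1 ≤ t) :
    Commute (sGen m n t) (cableLoop m n j q) := by
  refine Commute.list_prod_right _ _ fun x hx => ?_
  obtain ⟨i, hi, rfl⟩ := List.mem_map.mp hx
  exact sGen_commute_aConjLamD (by have := List.mem_range.mp hi; omega)

theorem aConjLamD_commute_conj (j k : ℕ) :
    Commute (aConjLamD m n j k) (sGen m n (k + 1) * aConjLamD m n j k * sGen m n (k + 1)) := by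
  induction k with
  | zero => simpa [aConjLamD, lamD] using aGen_commute_sGen_one_conj j
  | succ k ih =>
    rw [aConjLamD_succ]
    by_cases hk : k + 2 ≤ n - 1
    · exact ih.conj_of_braid (sGen_braid (by omega) hk) (sGen_commute_aConjLamD le_rfl).symm
    · rw [sGen_eq_one (k := k + 1 + 1) (by omega)]
      simp

theorem semiconjBy_cableLoop (j q : ℕ) :
    SemiconjBy (cableLoop m n j q) (aConjLamD m n j q) (aConjLamU m n j q) := by
  induction q with
  | zero => simp [cableLoop, aConjLamD, aConjLamU, lamD, lamU]
  | succ q ih =>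
    rw [cableLoop_succ, aConjLamD_succ, aConjLamU_succ]
    exact ih.mul_conj (sGen_commute_cableLoop le_rfl) (aConjLamD_commute_conj j q)

theorem cableLoop_eq_prod_aConjLamU (j q : ℕ) :
    cableLoop m n j q = ((List.range q).map fun i => aConjLamU m n j (q - 1 - i)).prod := by
  induction q with
  | zero => rfl
  | succ q ih =>
    rw [cableLoop_succ, (semiconjBy_cableLoop j q).eq, ih, List.prod_range_succ']
    simp only [Nat.add_sub_cancel, Nat.sub_zero, Nat.sub_sub, Nat.add_comm 1]

end MixedBraid

theorem positive_cable_looping_general (m n j q : ℕ) :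
    ((List.range q).map (fun i => lamD m n i * aGen m n j * (lamD m n i)⁻¹)).prod =
    ((List.range q).map
      (fun i => (lamU m n (q - 1 - i))⁻¹ * aGen m n j * lamU m n (q - 1 - i))).prod :=
  MixedBraid.cableLoop_eq_prod_aConjLamU j q

/-- The two algebraic expressions for a positive looping between a `q`-strand
cable and the `j`-th fixed strand are equal. -/
theorem positive_cable_looping (m n j q : ℕ) (hm : 1 ≤ m) (hn : 1 ≤ n)
    (hj1 : 1 ≤ j) (hj2 : j ≤ m) (hq1 : 1 ≤ q) (hq2 : q ≤ n) :
    ((List.range q).map (fun i => lamD m n i * aGen m n j * (lamD m n i)⁻¹)).prod =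
    ((List.range q).map
      (fun i => (lamU m n (q - 1 - i))⁻¹ * aGen m n j * lamU m n (q - 1 - i))).prod :=
  positive_cable_looping_general m n j q
end
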